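/- Consider the system ṙ = Ar with A = [[λ,1,0],[0,λ,1],[0,0,λ]] a 3×3 Jordan block with λ < 0, and initial value with z₀ ≠ 0. Then the curvature κ(t) of the trajectory tends to +∞ and the torsion satisfies |τ(t)| → ∞ as t → +∞. -/

import Mathlib

open Matrix Real Filter

noncomputable def e3norm (a : Fin 3 → ℝ) : ℝ := Real.sqrt (∑ i, (a i) ^ 2)

/-- Curvature of a space curve `r`. -/
noncomputable def curv (r : ℝ → Fin 3 → ℝ) (t : ℝ) : ℝ :=
  e3norm (crossProduct (deriv r t) (deriv (deriv r) t)) / (e3norm (deriv r t)) ^ 3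

/-- Torsion of a space curve `r`. -/
noncomputable def tors (r : ℝ → Fin 3 → ℝ) (t : ℝ) : ℝ :=
  (crossProduct (deriv r t) (deriv (deriv r) t) ⬝ᵥ deriv (deriv (deriv r)) t) /
    (e3norm (crossProduct (deriv r t) (deriv (deriv r) t))) ^ 2


noncomputable def pe (a b c l : ℝ) : ℝ → ℝ := fun t => (a + b*t + c*t^2) * Real.exp (l*t)

noncomputable def pev (l : ℝ) (p : ℝ × ℝ × ℝ) : ℝ → ℝ := pe p.1 p.2.1 p.2.2 l

def Dm (l : ℝ) (p : ℝ × ℝ × ℝ) : ℝ × ℝ × ℝ := (p.2.1 + l*p.1, 2*p.2.2 + l*p.2.1, l*p.2.2)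

lemma pe_hasDerivAt (a b c l t : ℝ) :
    HasDerivAt (pe a b c l) (pe (b + l*a) (2*c + l*b) (l*c) l t) t := by
  have hp : HasDerivAt (fun s : ℝ => a + b*s + c*s^2) (b + 2*c*t) t := by
    have h1 : HasDerivAt (fun s : ℝ => a + b*s) (b) t := by
      simpa using ((hasDerivAt_id t).const_mul b).const_add a
    have h2 : HasDerivAt (fun s : ℝ => c*s^2) (c*(2*t)) t := by
      simpa using (hasDerivAt_pow 2 t).const_mul c
    have h3 := h1.add h2
    exact h3.congr_deriv (by ring)
  have he : HasDerivAt (fun s : ℝ => Real.exp (l*s)) (Real.exp (l*t) * l) t := by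
    simpa using ((hasDerivAt_id t).const_mul l).exp
  have := hp.mul he
  simp only [pe]
  exact this.congr_deriv (by ring)

lemma pev_hasDerivAt (l : ℝ) (p : ℝ × ℝ × ℝ) (t : ℝ) :
    HasDerivAt (pev l p) (pev l (Dm l p) t) t := pe_hasDerivAt _ _ _ _ _

noncomputable def Rv (l : ℝ) (a b c : ℝ × ℝ × ℝ) : ℝ → Fin 3 → ℝ :=
  fun t => ![pev l a t, pev l b t, pev l c t]

lemma Rv_deriv (l : ℝ) (a b c : ℝ × ℝ × ℝ) :
    deriv (Rv l a b c) = Rv l (Dm l a) (Dm l b) (Dm l c) := by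
  funext t
  have : HasDerivAt (Rv l a b c) (Rv l (Dm l a) (Dm l b) (Dm l c) t) t := by
    rw [hasDerivAt_pi]
    intro i
    fin_cases i <;> simp only [Rv, Matrix.cons_val_zero, Matrix.cons_val_one,
      Matrix.head_cons, Matrix.cons_val_two, Matrix.tail_cons, Fin.isValue] <;>
      exact pev_hasDerivAt _ _ _
  exact this.deriv

noncomputable def Sconst (p : ℝ × ℝ × ℝ) : ℝ := |p.1| + |p.2.1| + |p.2.2|

lemma pev_bound (l : ℝ) (p : ℝ × ℝ × ℝ) (t : ℝ) (ht : 1 ≤ t) :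
    |pev l p t| ≤ Sconst p * (t^2 * Real.exp (l*t)) := by
  have ht0 : (0:ℝ) < t := by linarith
  have hE : (0:ℝ) < Real.exp (l*t) := Real.exp_pos _
  obtain ⟨a, b, c⟩ := p
  simp only [pev, pe, Sconst, abs_mul, Real.abs_exp]
  have h1 : |a + b*t + c*t^2| ≤ (|a| + |b| + |c|) * t^2 := by
    calc |a + b*t + c*t^2| ≤ |a| + |b*t| + |c*t^2| := by
          exact (abs_add_le _ _).trans (by gcongr; exact abs_add_le _ _)
      _ = |a| + |b| * t + |c| * t^2 := by
          rw [abs_mul, abs_mul, abs_of_pos ht0, abs_pow, abs_of_pos ht0]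
      _ ≤ (|a| + |b| + |c|) * t^2 := by
          have ht2 : 1 ≤ t^2 := by nlinarith
          nlinarith [mul_nonneg (abs_nonneg a) (show (0:ℝ) ≤ t^2 - 1 by linarith),
            mul_nonneg (abs_nonneg b) (show (0:ℝ) ≤ t^2 - t by nlinarith)]
  calc |a + b*t + c*t^2| * Real.exp (l*t) ≤ ((|a| + |b| + |c|) * t^2) * Real.exp (l*t) := by
        gcongr
    _ = (|a| + |b| + |c|) * (t^2 * Real.exp (l*t)) := by ring

lemma Sconst_nonneg (p : ℝ × ℝ × ℝ) : 0 ≤ Sconst p := by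
  simp only [Sconst]; positivity

lemma le_sqrt3 (a b c : ℝ) : |a| ≤ Real.sqrt (a^2 + b^2 + c^2) := by
  rw [← Real.sqrt_sq_eq_abs]
  exact Real.sqrt_le_sqrt (by nlinarith [sq_nonneg b, sq_nonneg c])

lemma sqrt3_le (a b c x y z : ℝ) (hx : |a| ≤ x) (hy : |b| ≤ y) (hz : |c| ≤ z) :
    Real.sqrt (a^2+b^2+c^2) ≤ Real.sqrt (x^2+y^2+z^2) := by
  apply Real.sqrt_le_sqrt
  nlinarith [sq_abs a, sq_abs b, sq_abs c, abs_nonneg a, abs_nonneg b, abs_nonneg c]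

lemma sqrt3_factor (x y z w : ℝ) (hw : 0 ≤ w) :
    Real.sqrt ((x*w)^2+(y*w)^2+(z*w)^2) = Real.sqrt (x^2+y^2+z^2) * w := by
  rw [show (x*w)^2+(y*w)^2+(z*w)^2 = (x^2+y^2+z^2)*w^2 by ring,
    Real.sqrt_mul (by positivity), Real.sqrt_sq hw]

lemma exp_beats (k : ℝ) (hk : 0 < k) (n : ℕ) :
    Tendsto (fun t => Real.exp (k*t) / t^n) atTop atTop := by
  have h := (tendsto_exp_div_pow_atTop n).comp (tendsto_id.const_mul_atTop hk)
  have h2 := h.atTop_mul_const (show (0:ℝ) < k^n by positivity)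
  apply h2.congr'
  filter_upwards [eventually_gt_atTop 0] with t ht
  have : (k*t)^n = k^n * t^n := by rw [mul_pow]
  field_simp [Function.comp]
  simp only [Function.comp_apply, id]
  field_simp
  ring

lemma cross_bound (a b c d Sa Sb Sc Sd ww : ℝ) (hw : 0 ≤ ww)
    (ha : |a| ≤ Sa*ww) (hb : |b| ≤ Sb*ww) (hc : |c| ≤ Sc*ww) (hd : |d| ≤ Sd*ww) :
    |a*d - c*b| ≤ (Sa*Sd + Sc*Sb) * ww^2 := by
  have h0 : |a*d - c*b| ≤ |a| * |d| + |c| * |b| := by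
    rw [← abs_mul, ← abs_mul]; exact abs_sub _ _
  have h2 : |a| * |d| ≤ (Sa*ww)*(Sd*ww) :=
    mul_le_mul ha hd (abs_nonneg d) (le_trans (abs_nonneg a) ha)
  have h3 : |c| * |b| ≤ (Sc*ww)*(Sb*ww) :=
    mul_le_mul hc hb (abs_nonneg b) (le_trans (abs_nonneg c) hc)
  nlinarith

lemma e3norm_vec (X Y Z : ℝ) : e3norm ![X, Y, Z] = Real.sqrt (X^2 + Y^2 + Z^2) := by
  simp [e3norm, Fin.sum_univ_three]

set_option maxHeartbeats 2000000 in
theorem curvature_torsion_jordan_block3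
    (l x0 y0 z0 : ℝ) (hl : l < 0) (hz : z0 ≠ 0)
    (r : ℝ → Fin 3 → ℝ)
    (hr : r = fun t =>
      ![(x0 + y0 * t + z0 * t ^ 2 / 2) * Real.exp (l * t),
        (y0 + z0 * t) * Real.exp (l * t),
        z0 * Real.exp (l * t)]) :
    Tendsto (curv r) atTop atTop ∧
      Tendsto (fun t => |tors r t|) atTop atTop := by
  have hlz : l * z0 ≠ 0 := mul_ne_zero (ne_of_lt hl) hz
  have hnl : (0:ℝ) < -l := by linarith
  have hr0 : r = Rv l ((x0,y0,z0/2) : ℝ × ℝ × ℝ) ((y0,z0,0) : ℝ × ℝ × ℝ) ((z0,0,0) : ℝ × ℝ × ℝ) := by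
    rw [hr]; funext t; ext i
    fin_cases i <;> (simp [Rv, pev, pe]; try ring)
  have hd1 : deriv r = Rv l (Dm l ((x0,y0,z0/2) : ℝ × ℝ × ℝ)) (Dm l ((y0,z0,0) : ℝ × ℝ × ℝ)) (Dm l ((z0,0,0) : ℝ × ℝ × ℝ)) := by
    rw [hr0, Rv_deriv]
  have hd2 : deriv (deriv r) = Rv l (Dm l (Dm l ((x0,y0,z0/2) : ℝ × ℝ × ℝ))) (Dm l (Dm l ((y0,z0,0) : ℝ × ℝ × ℝ))) (Dm l (Dm l ((z0,0,0) : ℝ × ℝ × ℝ))) := by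
    rw [hd1, Rv_deriv]
  have hd3 : deriv (deriv (deriv r)) = Rv l (Dm l (Dm l (Dm l ((x0,y0,z0/2) : ℝ × ℝ × ℝ)))) (Dm l (Dm l (Dm l ((y0,z0,0) : ℝ × ℝ × ℝ)))) (Dm l (Dm l (Dm l ((z0,0,0) : ℝ × ℝ × ℝ)))) := by
    rw [hd2, Rv_deriv]
  -- positivity of key constants
  have hSq3 : 0 < Sconst (Dm l ((z0,0,0) : ℝ × ℝ × ℝ)) := by
    have h1 : |l*z0| ≤ Sconst (Dm l ((z0,0,0) : ℝ × ℝ × ℝ)) := by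
      simp only [Sconst, Dm]; simp
    exact lt_of_lt_of_le (abs_pos.mpr hlz) h1
  have hSq2 : 0 < Sconst (Dm l ((y0,z0,0) : ℝ × ℝ × ℝ)) := by
    have h1 : |l*z0| ≤ Sconst (Dm l ((y0,z0,0) : ℝ × ℝ × ℝ)) := by
      simp only [Sconst, Dm]
      have := abs_nonneg (z0 + l*y0)
      have := abs_nonneg (l*(0:ℝ))
      have : |2*0 + l*z0| = |l*z0| := by norm_num
      simp only [this] at *
      linarith [abs_nonneg (z0 + l*y0), abs_nonneg (l*(0:ℝ))]
    exact lt_of_lt_of_le (abs_pos.mpr hlz) h1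
  have hSs3 : 0 < Sconst (Dm l (Dm l ((z0,0,0) : ℝ × ℝ × ℝ))) := by
    have h1 : |l*(l*z0)| ≤ Sconst (Dm l (Dm l ((z0,0,0) : ℝ × ℝ × ℝ))) := by
      simp only [Sconst, Dm]
      have h2 : |2*0 + l*0 + l*(0 + l*z0)| = |l*(l*z0)| := by norm_num
      simp only [h2]
      linarith [abs_nonneg ((2:ℝ)*(l*0) + l*(2*0 + l*0)), abs_nonneg (l*(l*(0:ℝ)))]
    exact lt_of_lt_of_le (abs_pos.mpr (mul_ne_zero (ne_of_lt hl) hlz)) h1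
  set K : ℝ := (Sconst (Dm l ((x0,y0,z0/2) : ℝ × ℝ × ℝ)))^2 + (Sconst (Dm l ((y0,z0,0) : ℝ × ℝ × ℝ)))^2 + (Sconst (Dm l ((z0,0,0) : ℝ × ℝ × ℝ)))^2 with hKdef
  have hK : 0 < K := by
    rw [hKdef]
    have hp3 := pow_pos hSq3 2
    have := Sconst_nonneg (Dm l ((x0,y0,z0/2) : ℝ × ℝ × ℝ))
    have := Sconst_nonneg (Dm l ((y0,z0,0) : ℝ × ℝ × ℝ))
    nlinarith [sq_nonneg (Sconst (Dm l ((x0,y0,z0/2) : ℝ × ℝ × ℝ))), sq_nonneg (Sconst (Dm l ((y0,z0,0) : ℝ × ℝ × ℝ)))]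
  set K2 : ℝ := (Sconst (Dm l ((y0,z0,0) : ℝ × ℝ × ℝ)) * Sconst (Dm l (Dm l ((z0,0,0) : ℝ × ℝ × ℝ))) + Sconst (Dm l ((z0,0,0) : ℝ × ℝ × ℝ)) * Sconst (Dm l (Dm l ((y0,z0,0) : ℝ × ℝ × ℝ))))^2 + (Sconst (Dm l ((z0,0,0) : ℝ × ℝ × ℝ)) * Sconst (Dm l (Dm l ((x0,y0,z0/2) : ℝ × ℝ × ℝ))) + Sconst (Dm l ((x0,y0,z0/2) : ℝ × ℝ × ℝ)) * Sconst (Dm l (Dm l ((z0,0,0) : ℝ × ℝ × ℝ))))^2 + (Sconst (Dm l ((x0,y0,z0/2) : ℝ × ℝ × ℝ)) * Sconst (Dm l (Dm l ((y0,z0,0) : ℝ × ℝ × ℝ))) + Sconst (Dm l ((y0,z0,0) : ℝ × ℝ × ℝ)) * Sconst (Dm l (Dm l ((x0,y0,z0/2) : ℝ × ℝ × ℝ))))^2 with hK2def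
  have hB1 : 0 < (Sconst (Dm l ((y0,z0,0) : ℝ × ℝ × ℝ)) * Sconst (Dm l (Dm l ((z0,0,0) : ℝ × ℝ × ℝ))) + Sconst (Dm l ((z0,0,0) : ℝ × ℝ × ℝ)) * Sconst (Dm l (Dm l ((y0,z0,0) : ℝ × ℝ × ℝ)))) := by
    have h3 := Sconst_nonneg (Dm l ((z0,0,0) : ℝ × ℝ × ℝ))
    have h4 := Sconst_nonneg (Dm l (Dm l ((y0,z0,0) : ℝ × ℝ × ℝ)))
    nlinarith [mul_pos hSq2 hSs3, mul_nonneg h3 h4]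
  have hK2 : 0 < K2 := by
    rw [hK2def]
    have n1 := Sconst_nonneg (Dm l ((z0,0,0) : ℝ × ℝ × ℝ))
    have n2 := Sconst_nonneg (Dm l (Dm l ((x0,y0,z0/2) : ℝ × ℝ × ℝ)))
    have n3 := Sconst_nonneg (Dm l ((x0,y0,z0/2) : ℝ × ℝ × ℝ))
    have n4 := Sconst_nonneg (Dm l (Dm l ((z0,0,0) : ℝ × ℝ × ℝ)))
    have n5 := Sconst_nonneg (Dm l ((y0,z0,0) : ℝ × ℝ × ℝ))
    have n6 := Sconst_nonneg (Dm l (Dm l ((y0,z0,0) : ℝ × ℝ × ℝ)))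
    nlinarith [pow_pos hB1 2, sq_nonneg (Sconst (Dm l ((z0,0,0) : ℝ × ℝ × ℝ)) * Sconst (Dm l (Dm l ((x0,y0,z0/2) : ℝ × ℝ × ℝ))) + Sconst (Dm l ((x0,y0,z0/2) : ℝ × ℝ × ℝ)) * Sconst (Dm l (Dm l ((z0,0,0) : ℝ × ℝ × ℝ)))), sq_nonneg (Sconst (Dm l ((x0,y0,z0/2) : ℝ × ℝ × ℝ)) * Sconst (Dm l (Dm l ((y0,z0,0) : ℝ × ℝ × ℝ))) + Sconst (Dm l ((y0,z0,0) : ℝ × ℝ × ℝ)) * Sconst (Dm l (Dm l ((x0,y0,z0/2) : ℝ × ℝ × ℝ))))]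
  set c0 : ℝ := l^2*z0^2 / (Real.sqrt K)^3 with hc0def
  have hsK : 0 < Real.sqrt K := Real.sqrt_pos.mpr hK
  have hc0 : 0 < c0 := by
    apply div_pos _ (by positivity)
    have : l^2*z0^2 = (l*z0)^2 := by ring
    rw [this]; positivity
  set c2 : ℝ := |l^3*z0^3| / K2 with hc2def
  have hc2 : 0 < c2 := by
    apply div_pos _ hK2
    have : l^3*z0^3 = (l*z0)^3 := by ring
    rw [this]
    exact abs_pos.mpr (pow_ne_zero _ hlz)
  constructor
  · -- curvature
    apply tendsto_atTop_mono' atTop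
      (show (fun t => c0 * (Real.exp (-l*t) / t^6)) ≤ᶠ[atTop] curv r from ?_)
      ((exp_beats (-l) hnl 6).const_mul_atTop hc0)
    filter_upwards [eventually_ge_atTop 1] with t ht
    have ht0 : (0:ℝ) < t := by linarith
    have hE : (0:ℝ) < Real.exp (l*t) := Real.exp_pos _
    have hW : (0:ℝ) ≤ t^2 * Real.exp (l*t) := by positivity
    -- cross product value
    have hcross : crossProduct (Rv l (Dm l ((x0,y0,z0/2) : ℝ × ℝ × ℝ)) (Dm l ((y0,z0,0) : ℝ × ℝ × ℝ)) (Dm l ((z0,0,0) : ℝ × ℝ × ℝ)) t) (Rv l (Dm l (Dm l ((x0,y0,z0/2) : ℝ × ℝ × ℝ))) (Dm l (Dm l ((y0,z0,0) : ℝ × ℝ × ℝ))) (Dm l (Dm l ((z0,0,0) : ℝ × ℝ × ℝ))) t)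
        = ![(pev l (Dm l ((y0,z0,0) : ℝ × ℝ × ℝ)) t * pev l (Dm l (Dm l ((z0,0,0) : ℝ × ℝ × ℝ))) t - pev l (Dm l ((z0,0,0) : ℝ × ℝ × ℝ)) t * pev l (Dm l (Dm l ((y0,z0,0) : ℝ × ℝ × ℝ))) t), (pev l (Dm l ((z0,0,0) : ℝ × ℝ × ℝ)) t * pev l (Dm l (Dm l ((x0,y0,z0/2) : ℝ × ℝ × ℝ))) t - pev l (Dm l ((x0,y0,z0/2) : ℝ × ℝ × ℝ)) t * pev l (Dm l (Dm l ((z0,0,0) : ℝ × ℝ × ℝ))) t), (pev l (Dm l ((x0,y0,z0/2) : ℝ × ℝ × ℝ)) t * pev l (Dm l (Dm l ((y0,z0,0) : ℝ × ℝ × ℝ))) t - pev l (Dm l ((y0,z0,0) : ℝ × ℝ × ℝ)) t * pev l (Dm l (Dm l ((x0,y0,z0/2) : ℝ × ℝ × ℝ))) t)] := by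
      simp [Rv, cross_apply]
    have hX1val : (pev l (Dm l ((y0,z0,0) : ℝ × ℝ × ℝ)) t * pev l (Dm l (Dm l ((z0,0,0) : ℝ × ℝ × ℝ))) t - pev l (Dm l ((z0,0,0) : ℝ × ℝ × ℝ)) t * pev l (Dm l (Dm l ((y0,z0,0) : ℝ × ℝ × ℝ))) t) = -(l^2*z0^2) * Real.exp (l*t)^2 := by
      simp only [pev, pe, Dm]; ring
    have hu3val : pev l (Dm l ((z0,0,0) : ℝ × ℝ × ℝ)) t = l*z0 * Real.exp (l*t) := by
      simp only [pev, pe, Dm]; ring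
    have hNlow : l^2*z0^2 * Real.exp (l*t)^2
        ≤ e3norm (crossProduct (Rv l (Dm l ((x0,y0,z0/2) : ℝ × ℝ × ℝ)) (Dm l ((y0,z0,0) : ℝ × ℝ × ℝ)) (Dm l ((z0,0,0) : ℝ × ℝ × ℝ)) t) (Rv l (Dm l (Dm l ((x0,y0,z0/2) : ℝ × ℝ × ℝ))) (Dm l (Dm l ((y0,z0,0) : ℝ × ℝ × ℝ))) (Dm l (Dm l ((z0,0,0) : ℝ × ℝ × ℝ))) t)) := by
      rw [hcross, e3norm_vec]
      have h1 := le_sqrt3 (pev l (Dm l ((y0,z0,0) : ℝ × ℝ × ℝ)) t * pev l (Dm l (Dm l ((z0,0,0) : ℝ × ℝ × ℝ))) t - pev l (Dm l ((z0,0,0) : ℝ × ℝ × ℝ)) t * pev l (Dm l (Dm l ((y0,z0,0) : ℝ × ℝ × ℝ))) t) (pev l (Dm l ((z0,0,0) : ℝ × ℝ × ℝ)) t * pev l (Dm l (Dm l ((x0,y0,z0/2) : ℝ × ℝ × ℝ))) t - pev l (Dm l ((x0,y0,z0/2) : ℝ × ℝ × ℝ)) t * pev l (Dm l (Dm l ((z0,0,0)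 : ℝ × ℝ × ℝ))) t) (pev l (Dm l ((x0,y0,z0/2) : ℝ × ℝ × ℝ)) t * pev l (Dm l (Dm l ((y0,z0,0) : ℝ × ℝ × ℝ))) t - pev l (Dm l ((y0,z0,0) : ℝ × ℝ × ℝ)) t * pev l (Dm l (Dm l ((x0,y0,z0/2) : ℝ × ℝ × ℝ))) t)
      have h2 : |(pev l (Dm l ((y0,z0,0) : ℝ × ℝ × ℝ)) t * pev l (Dm l (Dm l ((z0,0,0) : ℝ × ℝ × ℝ))) t - pev l (Dm l ((z0,0,0) : ℝ × ℝ × ℝ)) t * pev l (Dm l (Dm l ((y0,z0,0) : ℝ × ℝ × ℝ))) t)| = l^2*z0^2 * Real.exp (l*t)^2 := by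
        rw [hX1val, abs_mul, abs_neg, abs_of_nonneg (by positivity : (0:ℝ) ≤ l^2*z0^2),
          abs_of_nonneg (by positivity : (0:ℝ) ≤ Real.exp (l*t)^2)]
      linarith [h2 ▸ h1]
    have hDle : e3norm (Rv l (Dm l ((x0,y0,z0/2) : ℝ × ℝ × ℝ)) (Dm l ((y0,z0,0) : ℝ × ℝ × ℝ)) (Dm l ((z0,0,0) : ℝ × ℝ × ℝ)) t)
        ≤ Real.sqrt K * (t^2 * Real.exp (l*t)) := by
      have : e3norm (Rv l (Dm l ((x0,y0,z0/2) : ℝ × ℝ × ℝ)) (Dm l ((y0,z0,0) : ℝ × ℝ × ℝ)) (Dm l ((z0,0,0) : ℝ × ℝ × ℝ)) t)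
          = Real.sqrt ((pev l (Dm l ((x0,y0,z0/2) : ℝ × ℝ × ℝ)) t)^2 + (pev l (Dm l ((y0,z0,0) : ℝ × ℝ × ℝ)) t)^2 + (pev l (Dm l ((z0,0,0) : ℝ × ℝ × ℝ)) t)^2) := by
        simp [Rv, e3norm, Fin.sum_univ_three]
      rw [this, hKdef, ← sqrt3_factor _ _ _ _ hW]
      exact sqrt3_le _ _ _ _ _ _ (pev_bound l _ t ht) (pev_bound l _ t ht) (pev_bound l _ t ht)
    have hDpos : 0 < e3norm (Rv l (Dm l ((x0,y0,z0/2) : ℝ × ℝ × ℝ)) (Dm l ((y0,z0,0) : ℝ × ℝ × ℝ)) (Dm l ((z0,0,0) : ℝ × ℝ × ℝ)) t) := by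
      have : e3norm (Rv l (Dm l ((x0,y0,z0/2) : ℝ × ℝ × ℝ)) (Dm l ((y0,z0,0) : ℝ × ℝ × ℝ)) (Dm l ((z0,0,0) : ℝ × ℝ × ℝ)) t)
          = Real.sqrt ((pev l (Dm l ((x0,y0,z0/2) : ℝ × ℝ × ℝ)) t)^2 + (pev l (Dm l ((y0,z0,0) : ℝ × ℝ × ℝ)) t)^2 + (pev l (Dm l ((z0,0,0) : ℝ × ℝ × ℝ)) t)^2) := by
        simp [Rv, e3norm, Fin.sum_univ_three]
      rw [this]
      apply Real.sqrt_pos.mpr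
      have h3 : (pev l (Dm l ((z0,0,0) : ℝ × ℝ × ℝ)) t)^2 > 0 := by
        rw [hu3val]
        positivity
      nlinarith [sq_nonneg (pev l (Dm l ((x0,y0,z0/2) : ℝ × ℝ × ℝ)) t), sq_nonneg (pev l (Dm l ((y0,z0,0) : ℝ × ℝ × ℝ)) t)]
    have hNnonneg : 0 ≤ e3norm (crossProduct (Rv l (Dm l ((x0,y0,z0/2) : ℝ × ℝ × ℝ)) (Dm l ((y0,z0,0) : ℝ × ℝ × ℝ)) (Dm l ((z0,0,0) : ℝ × ℝ × ℝ)) t) (Rv l (Dm l (Dm l ((x0,y0,z0/2) : ℝ × ℝ × ℝ))) (Dm l (Dm l ((y0,z0,0) : ℝ × ℝ × ℝ))) (Dm l (Dm l ((z0,0,0) : ℝ × ℝ × ℝ))) t)) := by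
      rw [hcross, e3norm_vec]; exact Real.sqrt_nonneg _
    show c0 * (Real.exp (-l*t) / t^6) ≤ curv r t
    have heq : c0 * (Real.exp (-l*t) / t^6)
        = (l^2*z0^2 * Real.exp (l*t)^2) / (Real.sqrt K * (t^2 * Real.exp (l*t)))^3 := by
      rw [hc0def, show -l*t = -(l*t) by ring, Real.exp_neg]
      field_simp
    rw [heq]
    simp only [curv]
    rw [hd2, hd1]
    apply div_le_div₀ hNnonneg hNlow (by positivity)
    calc e3norm (Rv l (Dm l ((x0,y0,z0/2) : ℝ × ℝ × ℝ)) (Dm l ((y0,z0,0) : ℝ × ℝ × ℝ)) (Dm l ((z0,0,0) : ℝ × ℝ × ℝ)) t)^3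
        ≤ (Real.sqrt K * (t^2 * Real.exp (l*t)))^3 := by
          apply pow_le_pow_left₀ (le_of_lt hDpos) hDle
      _ = (Real.sqrt K * (t^2 * Real.exp (l*t)))^3 := rfl
  · -- torsion
    apply tendsto_atTop_mono' atTop
      (show (fun t => c2 * (Real.exp (-l*t) / t^8)) ≤ᶠ[atTop] (fun t => |tors r t|) from ?_)
      ((exp_beats (-l) hnl 8).const_mul_atTop hc2)
    filter_upwards [eventually_ge_atTop 1] with t ht
    have ht0 : (0:ℝ) < t := by linarith
    have hE : (0:ℝ) < Real.exp (l*t) := Real.exp_pos _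
    have hW : (0:ℝ) ≤ t^2 * Real.exp (l*t) := by positivity
    have hcross : crossProduct (Rv l (Dm l ((x0,y0,z0/2) : ℝ × ℝ × ℝ)) (Dm l ((y0,z0,0) : ℝ × ℝ × ℝ)) (Dm l ((z0,0,0) : ℝ × ℝ × ℝ)) t) (Rv l (Dm l (Dm l ((x0,y0,z0/2) : ℝ × ℝ × ℝ))) (Dm l (Dm l ((y0,z0,0) : ℝ × ℝ × ℝ))) (Dm l (Dm l ((z0,0,0) : ℝ × ℝ × ℝ))) t)
        = ![(pev l (Dm l ((y0,z0,0) : ℝ × ℝ × ℝ)) t * pev l (Dm l (Dm l ((z0,0,0) : ℝ × ℝ × ℝ))) t - pev l (Dm l ((z0,0,0) : ℝ × ℝ × ℝ)) t * pev l (Dm l (Dm l ((y0,z0,0) : ℝ × ℝ × ℝ))) t), (pev l (Dm l ((z0,0,0) : ℝ × ℝ × ℝ)) t * pev l (Dm l (Dm l ((x0,y0,z0/2) : ℝ × ℝ × ℝ))) t - pev l (Dm l ((x0,y0,z0/2) : ℝ × ℝ × ℝ)) t * pev l (Dm l (Dm l ((z0,0,0) : ℝ × ℝ × ℝ))) t),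 (pev l (Dm l ((x0,y0,z0/2) : ℝ × ℝ × ℝ)) t * pev l (Dm l (Dm l ((y0,z0,0) : ℝ × ℝ × ℝ))) t - pev l (Dm l ((y0,z0,0) : ℝ × ℝ × ℝ)) t * pev l (Dm l (Dm l ((x0,y0,z0/2) : ℝ × ℝ × ℝ))) t)] := by
      simp [Rv, cross_apply]
    have hX1val : (pev l (Dm l ((y0,z0,0) : ℝ × ℝ × ℝ)) t * pev l (Dm l (Dm l ((z0,0,0) : ℝ × ℝ × ℝ))) t - pev l (Dm l ((z0,0,0) : ℝ × ℝ × ℝ)) t * pev l (Dm l (Dm l ((y0,z0,0) : ℝ × ℝ × ℝ))) t) = -(l^2*z0^2) * Real.exp (l*t)^2 := by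
      simp only [pev, pe, Dm]; ring
    have hnumval : crossProduct (Rv l (Dm l ((x0,y0,z0/2) : ℝ × ℝ × ℝ)) (Dm l ((y0,z0,0) : ℝ × ℝ × ℝ)) (Dm l ((z0,0,0) : ℝ × ℝ × ℝ)) t) (Rv l (Dm l (Dm l ((x0,y0,z0/2) : ℝ × ℝ × ℝ))) (Dm l (Dm l ((y0,z0,0) : ℝ × ℝ × ℝ))) (Dm l (Dm l ((z0,0,0) : ℝ × ℝ × ℝ))) t)
        ⬝ᵥ (Rv l (Dm l (Dm l (Dm l ((x0,y0,z0/2) : ℝ × ℝ × ℝ)))) (Dm l (Dm l (Dm l ((y0,z0,0) : ℝ × ℝ × ℝ)))) (Dm l (Dm l (Dm l ((z0,0,0) : ℝ × ℝ × ℝ)))) t) = -(l^3*z0^3) * Real.exp (l*t)^3 := by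
      rw [hcross]
      simp only [Rv, dotProduct, Fin.sum_univ_three, Matrix.cons_val_zero,
        Matrix.cons_val_one, Matrix.head_cons, Matrix.cons_val_two, Matrix.tail_cons]
      simp only [pev, pe, Dm]
      ring
    set Q : ℝ := ((pev l (Dm l ((y0,z0,0) : ℝ × ℝ × ℝ)) t * pev l (Dm l (Dm l ((z0,0,0) : ℝ × ℝ × ℝ))) t - pev l (Dm l ((z0,0,0) : ℝ × ℝ × ℝ)) t * pev l (Dm l (Dm l ((y0,z0,0) : ℝ × ℝ × ℝ))) t))^2 + ((pev l (Dm l ((z0,0,0) : ℝ × ℝ × ℝ)) t * pev l (Dm l (Dm l ((x0,y0,z0/2) : ℝ × ℝ × ℝ))) t - pev l (Dm l ((x0,y0,z0/2) : ℝ × ℝ × ℝ)) t * pev l (Dm l (Dm l ((z0,0,0) : ℝ × ℝ × ℝ))) t))^2 + ((pev l (Dm l ((x0,y0,z0/2) : ℝ × ℝ × ℝ)) t * pev l (Dm l (Dm l ((y0,z0,0) : ℝ × ℝ × ℝ))) t - pev l (Dm l ((y0,z0,0) : ℝ × ℝ × ℝ)) t * pev l (Dm l (Dm l ((x0,y0,z0/2)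 : ℝ × ℝ × ℝ))) t))^2 with hQdef
    have hQnonneg : (0:ℝ) ≤ Q := by positivity
    have hQpos : 0 < Q := by
      rw [hQdef]
      have h2 : ((pev l (Dm l ((y0,z0,0) : ℝ × ℝ × ℝ)) t * pev l (Dm l (Dm l ((z0,0,0) : ℝ × ℝ × ℝ))) t - pev l (Dm l ((z0,0,0) : ℝ × ℝ × ℝ)) t * pev l (Dm l (Dm l ((y0,z0,0) : ℝ × ℝ × ℝ))) t))^2 > 0 := by
        rw [hX1val]
        have : (-(l^2*z0^2) * Real.exp (l*t)^2)^2 = ((l*z0)^2 * Real.exp (l*t)^2)^2 := by ring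
        rw [this]; positivity
      nlinarith [sq_nonneg ((pev l (Dm l ((z0,0,0) : ℝ × ℝ × ℝ)) t * pev l (Dm l (Dm l ((x0,y0,z0/2) : ℝ × ℝ × ℝ))) t - pev l (Dm l ((x0,y0,z0/2) : ℝ × ℝ × ℝ)) t * pev l (Dm l (Dm l ((z0,0,0) : ℝ × ℝ × ℝ))) t)), sq_nonneg ((pev l (Dm l ((x0,y0,z0/2) : ℝ × ℝ × ℝ)) t * pev l (Dm l (Dm l ((y0,z0,0) : ℝ × ℝ × ℝ))) t - pev l (Dm l ((y0,z0,0) : ℝ × ℝ × ℝ)) t * pev l (Dm l (Dm l ((x0,y0,z0/2) : ℝ × ℝ × ℝ))) t))]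
    have hnorm2 : (e3norm (crossProduct (Rv l (Dm l ((x0,y0,z0/2) : ℝ × ℝ × ℝ)) (Dm l ((y0,z0,0) : ℝ × ℝ × ℝ)) (Dm l ((z0,0,0) : ℝ × ℝ × ℝ)) t) (Rv l (Dm l (Dm l ((x0,y0,z0/2) : ℝ × ℝ × ℝ))) (Dm l (Dm l ((y0,z0,0) : ℝ × ℝ × ℝ))) (Dm l (Dm l ((z0,0,0) : ℝ × ℝ × ℝ))) t)))^2 = Q := by
      rw [hcross, e3norm_vec, Real.sq_sqrt hQnonneg]
    have hQle : Q ≤ K2 * (t^2 * Real.exp (l*t))^4 := by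
      have b1 : |(pev l (Dm l ((y0,z0,0) : ℝ × ℝ × ℝ)) t * pev l (Dm l (Dm l ((z0,0,0) : ℝ × ℝ × ℝ))) t - pev l (Dm l ((z0,0,0) : ℝ × ℝ × ℝ)) t * pev l (Dm l (Dm l ((y0,z0,0) : ℝ × ℝ × ℝ))) t)| ≤ (Sconst (Dm l ((y0,z0,0) : ℝ × ℝ × ℝ)) * Sconst (Dm l (Dm l ((z0,0,0) : ℝ × ℝ × ℝ))) + Sconst (Dm l ((z0,0,0) : ℝ × ℝ × ℝ)) * Sconst (Dm l (Dm l ((y0,z0,0) : ℝ × ℝ × ℝ)))) * (t^2 * Real.exp (l*t))^2 :=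
        cross_bound _ _ _ _ _ _ _ _ _ hW (pev_bound l _ t ht) (pev_bound l _ t ht)
          (pev_bound l _ t ht) (pev_bound l _ t ht)
      have b2 : |(pev l (Dm l ((z0,0,0) : ℝ × ℝ × ℝ)) t * pev l (Dm l (Dm l ((x0,y0,z0/2) : ℝ × ℝ × ℝ))) t - pev l (Dm l ((x0,y0,z0/2) : ℝ × ℝ × ℝ)) t * pev l (Dm l (Dm l ((z0,0,0) : ℝ × ℝ × ℝ))) t)| ≤ (Sconst (Dm l ((z0,0,0) : ℝ × ℝ × ℝ)) * Sconst (Dm l (Dm l ((x0,y0,z0/2) : ℝ × ℝ × ℝ))) + Sconst (Dm l ((x0,y0,z0/2) : ℝ × ℝ × ℝ)) * Sconst (Dm l (Dm l ((z0,0,0) : ℝ × ℝ × ℝ)))) * (t^2 * Real.exp (l*t))^2 :=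
        cross_bound _ _ _ _ _ _ _ _ _ hW (pev_bound l _ t ht) (pev_bound l _ t ht)
          (pev_bound l _ t ht) (pev_bound l _ t ht)
      have b3 : |(pev l (Dm l ((x0,y0,z0/2) : ℝ × ℝ × ℝ)) t * pev l (Dm l (Dm l ((y0,z0,0) : ℝ × ℝ × ℝ))) t - pev l (Dm l ((y0,z0,0) : ℝ × ℝ × ℝ)) t * pev l (Dm l (Dm l ((x0,y0,z0/2) : ℝ × ℝ × ℝ))) t)| ≤ (Sconst (Dm l ((x0,y0,z0/2) : ℝ × ℝ × ℝ)) * Sconst (Dm l (Dm l ((y0,z0,0) : ℝ × ℝ × ℝ))) + Sconst (Dm l ((y0,z0,0) : ℝ × ℝ × ℝ)) * Sconst (Dm l (Dm l ((x0,y0,z0/2) : ℝ × ℝ × ℝ)))) * (t^2 * Real.exp (l*t))^2 :=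
        cross_bound _ _ _ _ _ _ _ _ _ hW (pev_bound l _ t ht) (pev_bound l _ t ht)
          (pev_bound l _ t ht) (pev_bound l _ t ht)
      have e1 : ((pev l (Dm l ((y0,z0,0) : ℝ × ℝ × ℝ)) t * pev l (Dm l (Dm l ((z0,0,0) : ℝ × ℝ × ℝ))) t - pev l (Dm l ((z0,0,0) : ℝ × ℝ × ℝ)) t * pev l (Dm l (Dm l ((y0,z0,0) : ℝ × ℝ × ℝ))) t))^2 ≤ ((Sconst (Dm l ((y0,z0,0) : ℝ × ℝ × ℝ)) * Sconst (Dm l (Dm l ((z0,0,0) : ℝ × ℝ × ℝ))) + Sconst (Dm l ((z0,0,0) : ℝ × ℝ × ℝ)) * Sconst (Dm l (Dm l ((y0,z0,0) : ℝ × ℝ × ℝ)))) * (t^2 * Real.exp (l*t))^2)^2 := by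
        rw [← sq_abs]; exact pow_le_pow_left₀ (abs_nonneg _) b1 2
      have e2 : ((pev l (Dm l ((z0,0,0) : ℝ × ℝ × ℝ)) t * pev l (Dm l (Dm l ((x0,y0,z0/2) : ℝ × ℝ × ℝ))) t - pev l (Dm l ((x0,y0,z0/2) : ℝ × ℝ × ℝ)) t * pev l (Dm l (Dm l ((z0,0,0) : ℝ × ℝ × ℝ))) t))^2 ≤ ((Sconst (Dm l ((z0,0,0) : ℝ × ℝ × ℝ)) * Sconst (Dm l (Dm l ((x0,y0,z0/2) : ℝ × ℝ × ℝ))) + Sconst (Dm l ((x0,y0,z0/2) : ℝ × ℝ × ℝ)) * Sconst (Dm l (Dm l ((z0,0,0) : ℝ × ℝ × ℝ)))) * (t^2 * Real.exp (l*t))^2)^2 := by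
        rw [← sq_abs]; exact pow_le_pow_left₀ (abs_nonneg _) b2 2
      have e3 : ((pev l (Dm l ((x0,y0,z0/2) : ℝ × ℝ × ℝ)) t * pev l (Dm l (Dm l ((y0,z0,0) : ℝ × ℝ × ℝ))) t - pev l (Dm l ((y0,z0,0) : ℝ × ℝ × ℝ)) t * pev l (Dm l (Dm l ((x0,y0,z0/2) : ℝ × ℝ × ℝ))) t))^2 ≤ ((Sconst (Dm l ((x0,y0,z0/2) : ℝ × ℝ × ℝ)) * Sconst (Dm l (Dm l ((y0,z0,0) : ℝ × ℝ × ℝ))) + Sconst (Dm l ((y0,z0,0) : ℝ × ℝ × ℝ)) * Sconst (Dm l (Dm l ((x0,y0,z0/2) : ℝ × ℝ × ℝ)))) * (t^2 * Real.exp (l*t))^2)^2 := by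
        rw [← sq_abs]; exact pow_le_pow_left₀ (abs_nonneg _) b3 2
      rw [hQdef]
      calc ((pev l (Dm l ((y0,z0,0) : ℝ × ℝ × ℝ)) t * pev l (Dm l (Dm l ((z0,0,0) : ℝ × ℝ × ℝ))) t - pev l (Dm l ((z0,0,0) : ℝ × ℝ × ℝ)) t * pev l (Dm l (Dm l ((y0,z0,0) : ℝ × ℝ × ℝ))) t))^2 + ((pev l (Dm l ((z0,0,0) : ℝ × ℝ × ℝ)) t * pev l (Dm l (Dm l ((x0,y0,z0/2) : ℝ × ℝ × ℝ))) t - pev l (Dm l ((x0,y0,z0/2) : ℝ × ℝ × ℝ)) t * pev l (Dm l (Dm l ((z0,0,0) : ℝ × ℝ × ℝ))) t))^2 + ((pev l (Dm l ((x0,y0,z0/2) : ℝ × ℝ × ℝ)) t * pev l (Dm l (Dm l ((y0,z0,0) : ℝ × ℝ × ℝ))) t - pev l (Dm l ((y0,z0,0) : ℝ × ℝ × ℝ)) t * pev l (Dm l (Dm l ((x0,y0,z0/2) : ℝ × ℝ × ℝ))) t))^2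
          ≤ ((Sconst (Dm l ((y0,z0,0) : ℝ × ℝ × ℝ)) * Sconst (Dm l (Dm l ((z0,0,0) : ℝ × ℝ × ℝ))) + Sconst (Dm l ((z0,0,0) : ℝ × ℝ × ℝ)) * Sconst (Dm l (Dm l ((y0,z0,0) : ℝ × ℝ × ℝ)))) * (t^2 * Real.exp (l*t))^2)^2 + ((Sconst (Dm l ((z0,0,0) : ℝ × ℝ × ℝ)) * Sconst (Dm l (Dm l ((x0,y0,z0/2) : ℝ × ℝ × ℝ))) + Sconst (Dm l ((x0,y0,z0/2) : ℝ × ℝ × ℝ)) * Sconst (Dm l (Dm l ((z0,0,0) : ℝ × ℝ × ℝ)))) * (t^2 * Real.exp (l*t))^2)^2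
            + ((Sconst (Dm l ((x0,y0,z0/2) : ℝ × ℝ × ℝ)) * Sconst (Dm l (Dm l ((y0,z0,0) : ℝ × ℝ × ℝ))) + Sconst (Dm l ((y0,z0,0) : ℝ × ℝ × ℝ)) * Sconst (Dm l (Dm l ((x0,y0,z0/2) : ℝ × ℝ × ℝ)))) * (t^2 * Real.exp (l*t))^2)^2 := by linarith
        _ = K2 * (t^2 * Real.exp (l*t))^4 := by rw [hK2def]; ring
    show c2 * (Real.exp (-l*t) / t^8) ≤ |tors r t|
    have htorseq : |tors r t| = |l^3*z0^3| * Real.exp (l*t)^3 / Q := by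
      simp only [tors]
      rw [hd3, hd2, hd1]
      rw [hnorm2, hnumval, abs_div, abs_of_pos hQpos, abs_mul, abs_neg]
      congr 1
      rw [abs_pow, Real.abs_exp]
    rw [htorseq]
    have heq : c2 * (Real.exp (-l*t) / t^8)
        = (|l^3*z0^3| * Real.exp (l*t)^3) / (K2 * (t^2 * Real.exp (l*t))^4) := by
      rw [hc2def, show -l*t = -(l*t) by ring, Real.exp_neg]
      field_simp
    rw [heq]
    apply div_le_div₀ (by positivity) le_rfl hQpos hQle
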